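/- arXiv:1808.02575 — 9 statements merged into one kernel-verified Lean document; each statement's English description precedes it below -/
import Mathlib

section
/- (Antoulas' lemma) Assume deg r_0 > deg r_1 ≥ 0. For every a, b, c ∈ K[x] satisfying a = r_1·b + r_0·c, there exist unique polynomials m_0, m_1, …, m_{N+1} ∈ K[x] with deg m_i < deg q_i for i = 1, …, N, such that (a, b, c) = Σ_{i=0}^{N+1} m_i · (r_i, s_i, t_i). -/
open Polynomial Finset

private lemma wbA {a b : WithBot ℕ} (ha : 1 ≤ a) (hb : 0 ≤ b) : b < a + b := by
  induction a using WithBot.recBotCoe with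
  | bot => simp at ha
  | coe a =>
    induction b using WithBot.recBotCoe with
    | bot => simp at hb
    | coe b =>
      rw [← WithBot.coe_one, WithBot.coe_le_coe] at ha
      rw [← WithBot.coe_add, WithBot.coe_lt_coe]
      omega

private lemma wbB {a b : WithBot ℕ} (ha : 0 ≤ a) : b ≤ a + b := by
  induction a using WithBot.recBotCoe with
  | bot => simp at ha
  | coe a =>
    induction b using WithBot.recBotCoe with
    | bot => simp
    | coe b =>
      rw [← WithBot.coe_add, WithBot.coe_le_coe]
      omega

private lemma wbne {a : WithBot ℕ} (h : 0 ≤ a) : a ≠ ⊥ := by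
  intro hbot; rw [hbot] at h; simp at h

/-- Antoulas' lemma: assume `deg r_0 > deg r_1 ≥ 0`.  Every solution
`(a,b,c)` of `a = r_1·b + r_0·c` is a unique combination
`(a,b,c) = Σ_{i=0}^{N+1} m_i·(r_i, s_i, t_i)` with `deg m_i < deg q_i` for `1 ≤ i ≤ N`. -/
theorem statement7 {K : Type*} [Field K] (r q s t : ℕ → Polynomial K) (N : ℕ)
    (hr1 : r 1 ≠ 0) (hd01 : (r 1).degree < (r 0).degree)
    (hrec : ∀ i, i < N → r i = q (i + 1) * r (i + 1) + r (i + 2))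
    (hdeg : ∀ i, 1 ≤ i → i ≤ N → (r (i + 1)).degree < (r i).degree)
    (hq : ∀ i, 1 ≤ i → i ≤ N → q i ≠ 0)
    (hrN : r N ≠ 0) (hrN1 : r (N + 1) = 0)
    (hs0 : s 0 = 0) (hs1 : s 1 = 1)
    (hsrec : ∀ i, i < N → s (i + 2) = s i - q (i + 1) * s (i + 1))
    (ht0 : t 0 = 1) (ht1 : t 1 = 0)
    (htrec : ∀ i, i < N → t (i + 2) = t i - q (i + 1) * t (i + 1)) :
    ∀ a b c : Polynomial K, a = r 1 * b + r 0 * c →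
      ∃! m : ℕ → Polynomial K,
        (∀ i, N + 1 < i → m i = 0) ∧
        (∀ i, 1 ≤ i → i ≤ N → (m i).degree < (q i).degree) ∧
        a = ∑ i ∈ range (N + 2), m i * r i ∧
        b = ∑ i ∈ range (N + 2), m i * s i ∧
        c = ∑ i ∈ range (N + 2), m i * t i := by
  -- N is positive
  have hN : 1 ≤ N := by
    by_contra h
    have : N = 0 := by omega
    exact hr1 (by rw [← zero_add 1, ← this]; exact hrN1)
  -- the quotients have degree ≥ 1
  have qdeg : ∀ i, 1 ≤ i → i ≤ N → 1 ≤ (q i).degree := by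
    intro i h1 h2
    obtain ⟨j, rfl⟩ : ∃ j, i = j + 1 := ⟨i - 1, by omega⟩
    have hlt1 : (r (j + 2)).degree < (r (j + 1)).degree := hdeg (j + 1) (by omega) (by omega)
    have hlt0 : (r (j + 1)).degree < (r j).degree := by
      rcases Nat.eq_zero_or_pos j with hj | hj
      · subst hj; exact hd01
      · exact hdeg j (by omega) (by omega)
    have hq0 : q (j + 1) ≠ 0 := hq (j + 1) (by omega) (by omega)
    have hr0 : r (j + 1) ≠ 0 := by
      intro h; rw [h] at hlt1; exact absurd hlt1 (by simp)
    have hqr : q (j + 1) * r (j + 1) = r j - r (j + 2) := by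
      rw [hrec j (by omega)]; ring
    have hd : (r j - r (j + 2)).degree = (r j).degree :=
      degree_sub_eq_left_of_degree_lt (hlt1.trans hlt0)
    have key : (q (j + 1)).degree + (r (j + 1)).degree = (r j).degree := by
      rw [← degree_mul, hqr, hd]
    by_contra hcon
    have hq1 : (q (j + 1)).natDegree = 0 := by
      by_contra h
      apply hcon
      rw [degree_eq_natDegree hq0]
      exact_mod_cast by omega
    have : (q (j + 1)).degree = (0 : ℕ) := by
      rw [degree_eq_natDegree hq0, hq1]
    rw [this] at key
    simp at key
    rw [key] at hlt0
    exact lt_irrefl _ hlt0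
  -- degree formula for s
  have sdeg : ∀ i, 1 ≤ i → i ≤ N →
      0 ≤ (s i).degree ∧ (s (i + 1)).degree = (q i).degree + (s i).degree := by
    intro i h1
    induction i, h1 using Nat.le_induction with
    | base =>
      intro _
      constructor
      · simp [hs1]
      · rw [hsrec 0 (by omega), hs0, hs1]
        simp
    | succ i hi ih =>
      intro h2
      obtain ⟨h0, hf⟩ := ih (by omega)
      have hq1 : 1 ≤ (q i).degree := qdeg i (by omega) (by omega)
      have h0' : 0 ≤ (s (i + 1)).degree := by
        rw [hf]; exact h0.trans (le_of_lt (wbA hq1 h0))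
      refine ⟨h0', ?_⟩
      have hlt : (s i).degree < (q (i + 1) * s (i + 1)).degree := by
        rw [degree_mul]
        calc (s i).degree < (s (i + 1)).degree := by
              rw [hf]; exact wbA hq1 h0
          _ < (q (i + 1)).degree + (s (i + 1)).degree :=
              wbA (qdeg (i + 1) (by omega) (by omega)) h0'
      rw [hsrec i (by omega), degree_sub_eq_right_of_degree_lt hlt, degree_mul]
  -- positivity of degrees of s up to N+1
  have spos : ∀ i, 1 ≤ i → i ≤ N + 1 → 0 ≤ (s i).degree := by
    intro i h1 h2
    rcases le_or_gt i N with h | h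
    · exact (sdeg i h1 h).1
    · have : i = N + 1 := by omega
      subst this
      obtain ⟨h0, hf⟩ := sdeg N hN le_rfl
      rw [hf]
      exact h0.trans (le_of_lt (wbA (qdeg N hN le_rfl) h0))
  -- monotonicity of degrees of s
  have smono : ∀ i j, 1 ≤ i → i ≤ j → j ≤ N + 1 → (s i).degree ≤ (s j).degree := by
    intro i j h1 hij
    induction j, hij using Nat.le_induction with
    | base => intro _; exact le_rfl
    | succ j hj ih =>
      intro h2
      refine (ih (by omega)).trans ?_
      obtain ⟨h0, hf⟩ := sdeg j (by omega) (by omega)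
      rw [hf]
      exact le_of_lt (wbA (qdeg j (by omega) (by omega)) h0)
  -- a sum of m_i s_i with small m_i has degree below deg s (k+1)
  have sumbound : ∀ k, k ≤ N → ∀ m : ℕ → Polynomial K,
      (∀ i, 1 ≤ i → i ≤ k → (m i).degree < (q i).degree) →
      (∑ i ∈ range (k + 1), m i * s i).degree < (s (k + 1)).degree := by
    intro k hk m hm
    refine lt_of_le_of_lt (degree_sum_le _ _) ?_
    rw [Finset.sup_lt_iff (lt_of_lt_of_le (by simp [bot_lt_iff_ne_bot] :
        (⊥ : WithBot ℕ) < 0) (spos (k + 1) (by omega) (by omega)))]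
    intro i hi
    rw [mem_range] at hi
    rcases Nat.eq_zero_or_pos i with h | h
    · subst h
      rw [hs0, mul_zero]
      exact lt_of_lt_of_le (by simp [bot_lt_iff_ne_bot] : (⊥ : WithBot ℕ) < 0)
        (spos (k + 1) (by omega) (by omega))
    · have hik : i ≤ k := by omega
      have hine : (s i).degree ≠ ⊥ := wbne (spos i h (by omega))
      calc (m i * s i).degree = (m i).degree + (s i).degree := degree_mul
        _ < (q i).degree + (s i).degree :=
            WithBot.add_lt_add_right hine (hm i h hik)
        _ = (s (i + 1)).degree := ((sdeg i h (by omega)).2).symm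
        _ ≤ (s (k + 1)).degree := smono (i + 1) (k + 1) (by omega) (by omega) (by omega)
  -- uniqueness core: vanishing combination has zero coefficients
  have zerosum : ∀ k, k ≤ N + 1 → ∀ m : ℕ → Polynomial K,
      (∀ i, 1 ≤ i → i ≤ N → (m i).degree < (q i).degree) →
      (∑ i ∈ range (k + 1), m i * s i) = 0 →
      ∀ i, 1 ≤ i → i ≤ k → m i = 0 := by
    intro k
    induction k with
    | zero => intro _ m _ _ i h1 h2; omega
    | succ k ih =>
      intro hk m hm hsum i h1 h2
      rw [Finset.sum_range_succ] at hsum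
      have hL : (∑ i ∈ range (k + 1), m i * s i).degree < (s (k + 1)).degree :=
        sumbound k (by omega) m (fun i hi1 hi2 => hm i hi1 (by omega))
      have hms : m (k + 1) * s (k + 1) = -(∑ i ∈ range (k + 1), m i * s i) :=
        eq_neg_of_add_eq_zero_right hsum
      have hmk : m (k + 1) = 0 := by
        by_contra hne
        have h0 : 0 ≤ (m (k + 1)).degree := zero_le_degree_iff.mpr hne
        have : (m (k + 1) * s (k + 1)).degree < (s (k + 1)).degree := by
          rw [hms, degree_neg]; exact hL
        rw [degree_mul] at this
        exact absurd this (not_lt.mpr (wbB h0))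
      have hsum' : (∑ i ∈ range (k + 1), m i * s i) = 0 := by
        rw [hmk, zero_mul, add_zero] at hsum; exact hsum
      rcases Nat.lt_or_ge i (k + 1) with h | h
      · exact ih (by omega) m hm hsum' i h1 (by omega)
      · have : i = k + 1 := by omega
        rw [this]; exact hmk
  -- existence of the expansion of a polynomial in the s-basis
  have exist1 : ∀ k, k ≤ N + 1 → ∀ g : Polynomial K,
      (k ≤ N → g.degree < (s (k + 1)).degree) →
      ∃ m : ℕ → Polynomial K,
        (∀ i, (i = 0 ∨ k < i) → m i = 0) ∧
        (∀ i, 1 ≤ i → i ≤ N → (m i).degree < (q i).degree) ∧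
        g = ∑ i ∈ range (k + 1), m i * s i := by
    intro k
    induction k with
    | zero =>
      intro _ g hcond
      have hg : g = 0 := by
        by_contra hg
        have := hcond (by omega)
        rw [hs1, degree_one] at this
        exact absurd (zero_le_degree_iff.mpr hg) (not_le.mpr this)
      refine ⟨fun _ => 0, fun i _ => rfl, fun i _ _ => ?_, ?_⟩
      · simp only [degree_zero]
        exact lt_of_lt_of_le (by simp [bot_lt_iff_ne_bot] : (⊥ : WithBot ℕ) < 0)
          ((qdeg i ‹1 ≤ i› ‹i ≤ N›).trans' (by norm_num))
      · simp [hg]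
    | succ k ih =>
      intro hk g hcond
      have hsne : s (k + 1) ≠ 0 :=
        zero_le_degree_iff.mp (spos (k + 1) (by omega) (by omega))
      set m' := g / s (k + 1) with hm'def
      set g' := g % s (k + 1) with hg'def
      have hg' : g'.degree < (s (k + 1)).degree := EuclideanDomain.mod_lt g hsne
      have hdiv : s (k + 1) * m' + g' = g := EuclideanDomain.div_add_mod g (s (k + 1))
      have hm' : k + 1 ≤ N → m'.degree < (q (k + 1)).degree := by
        intro h
        have hgd : g.degree < (s (k + 2)).degree := hcond h
        have hformula : (s (k + 2)).degree = (q (k + 1)).degree + (s (k + 1)).degree :=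
          (sdeg (k + 1) (by omega) h).2
        have hsub : (s (k + 1) * m').degree < (s (k + 2)).degree := by
          have : s (k + 1) * m' = g - g' := by rw [← hdiv]; ring
          rw [this]
          exact lt_of_le_of_lt (degree_sub_le g g')
            (max_lt hgd (hg'.trans_le (smono (k + 1) (k + 2) (by omega) (by omega) (by omega))))
        rw [degree_mul, hformula, add_comm ((q (k + 1)).degree)] at hsub
        exact (WithBot.add_lt_add_iff_left (wbne (spos (k + 1) (by omega) (by omega)))).mp hsub
      obtain ⟨m'', hz'', hd'', hsum''⟩ := ih (by omega) g' (fun _ => hg')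
      refine ⟨fun i => if i = k + 1 then m' else m'' i, ?_, ?_, ?_⟩
      · intro i hi
        dsimp only
        rcases hi with hi | hi
        · rw [if_neg (by omega)]; exact hz'' i (Or.inl hi)
        · rw [if_neg (by omega)]; exact hz'' i (Or.inr (by omega))
      · intro i h1 h2
        dsimp only
        rcases eq_or_ne i (k + 1) with hik | hik
        · rw [if_pos hik, hik]
          exact hm' (hik ▸ h2)
        · rw [if_neg hik]; exact hd'' i h1 h2
      · dsimp only
        rw [Finset.sum_range_succ, if_pos rfl]
        have : ∑ i ∈ range (k + 1), (if i = k + 1 then m' else m'' i) * s i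
            = ∑ i ∈ range (k + 1), m'' i * s i := by
          refine Finset.sum_congr rfl (fun i hi => ?_)
          rw [mem_range] at hi
          rw [if_neg (by omega)]
        rw [this, ← hsum'', ← hdiv]
        ring
  -- r i = r 1 * s i + r 0 * t i
  have hrst : ∀ i, i ≤ N + 1 → r i = r 1 * s i + r 0 * t i := by
    intro i
    induction i using Nat.strong_induction_on with
    | _ i ih =>
      match i with
      | 0 => intro _; rw [hs0, ht0]; ring
      | 1 => intro _; rw [hs1, ht1]; ring
      | (j + 2) =>
        intro hj
        have hjN : j < N := by omega
        have h1 := ih j (by omega) (by omega)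
        have h2 := ih (j + 1) (by omega) (by omega)
        rw [hsrec j hjN, htrec j hjN]
        linear_combination h1 - q (j + 1) * h2 - hrec j hjN
  -- main proof
  intro a b c habc
  obtain ⟨mb, hzb, hdb, hb⟩ := exist1 (N + 1) le_rfl b (fun h => absurd h (by omega))
  set m0 : Polynomial K := c - ∑ i ∈ range (N + 2), mb i * t i with hm0def
  set m : ℕ → Polynomial K := fun i => if i = 0 then m0 else mb i with hmdef
  have hmb0 : mb 0 = 0 := hzb 0 (Or.inl rfl)
  have hbeq : b = ∑ i ∈ range (N + 2), m i * s i := by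
    rw [hb]
    refine Finset.sum_congr rfl (fun i _ => ?_)
    rcases eq_or_ne i 0 with h | h
    · subst h; rw [hs0, mul_zero, mul_zero]
    · simp only [hmdef, if_neg h]
  have hceq : c = ∑ i ∈ range (N + 2), m i * t i := by
    have hdiff : ∑ i ∈ range (N + 2), (m i * t i - mb i * t i) = m0 * t 0 - mb 0 * t 0 := by
      refine Finset.sum_eq_single 0 (fun i _ hi => ?_) (fun h => absurd (by simp) h)
      simp only [hmdef, if_neg hi, sub_self]
    rw [Finset.sum_sub_distrib] at hdiff
    have : ∑ i ∈ range (N + 2), m i * t i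
        = ∑ i ∈ range (N + 2), mb i * t i + (m0 * t 0 - mb 0 * t 0) := by
      rw [← hdiff]; ring
    rw [this, hmb0, ht0, hm0def]
    ring
  have haeq : a = ∑ i ∈ range (N + 2), m i * r i := by
    rw [habc, hbeq, hceq, Finset.mul_sum, Finset.mul_sum, ← Finset.sum_add_distrib]
    refine Finset.sum_congr rfl (fun i hi => ?_)
    rw [mem_range] at hi
    rw [hrst i (by omega)]
    ring
  refine ⟨m, ⟨?_, ?_, haeq, hbeq, hceq⟩, ?_⟩
  · intro i hi
    simp only [hmdef, if_neg (by omega : i ≠ 0)]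
    exact hzb i (Or.inr hi)
  · intro i h1 h2
    simp only [hmdef, if_neg (by omega : i ≠ 0)]
    exact hdb i h1 h2
  · -- uniqueness
    rintro y ⟨hyz, hydeg, hya, hyb, hyc⟩
    set n : ℕ → Polynomial K := fun i => y i - m i with hndef
    have hmz : ∀ i, N + 1 < i → m i = 0 := by
      intro i hi
      simp only [hmdef, if_neg (by omega : i ≠ 0)]
      exact hzb i (Or.inr hi)
    have hmdeg : ∀ i, 1 ≤ i → i ≤ N → (m i).degree < (q i).degree := by
      intro i h1 h2
      simp only [hmdef, if_neg (by omega : i ≠ 0)]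
      exact hdb i h1 h2
    have hbn : ∑ i ∈ range (N + 2), n i * s i = 0 := by
      simp only [hndef, sub_mul]
      rw [Finset.sum_sub_distrib, ← hyb, ← hbeq, sub_self]
    have hdn : ∀ i, 1 ≤ i → i ≤ N → (n i).degree < (q i).degree := by
      intro i h1 h2
      exact lt_of_le_of_lt (degree_sub_le _ _) (max_lt (hydeg i h1 h2) (hmdeg i h1 h2))
    have hzero : ∀ i, 1 ≤ i → i ≤ N + 1 → n i = 0 := zerosum (N + 1) le_rfl n hdn hbn
    have hn0 : n 0 = 0 := by
      have hcn : ∑ i ∈ range (N + 2), n i * t i = 0 := by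
        simp only [hndef, sub_mul]
        rw [Finset.sum_sub_distrib, ← hyc, ← hceq, sub_self]
      have : ∑ i ∈ range (N + 2), n i * t i = n 0 * t 0 := by
        refine Finset.sum_eq_single 0 (fun i hi hne => ?_) (fun h => absurd (by simp) h)
        rw [mem_range] at hi
        rw [hzero i (by omega) (by omega), zero_mul]
      rw [this, ht0, mul_one] at hcn
      exact hcn
    funext i
    rcases Nat.eq_zero_or_pos i with h | h
    · subst h; exact sub_eq_zero.mp hn0
    · rcases le_or_gt i (N + 1) with h2 | h2
      · exact sub_eq_zero.mp (hzero i h h2)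
      · rw [hyz i h2, hmz i h2]
end

section
/- For every 0 ≤ i ≤ N−1, the pairs (r_i, s_i) and (r_{i+1}, s_{i+1}) from the Extended Euclidean Algorithm applied to r_0 = f and r_1 = g form a basis of the free K[x]-module Y = {(a, b) ∈ K[x]^2 : f divides a − b·g}. -/
open Polynomial Finset

/-- for `0 ≤ i ≤ N-1`, the pairs `(r_i, s_i)` and `(r_{i+1}, s_{i+1})` from
the EEA applied to `r_0 = f`, `r_1 = g` form a basis of
`Y = {(a,b) ∈ K[x]² : f ∣ a - b·g}`. -/
theorem statement8 {K : Type*} [Field K] (f g : Polynomial K)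
    (hg0 : g ≠ 0) (hfg : g.degree < f.degree)
    (r q s t : ℕ → Polynomial K) (N : ℕ)
    (hr0 : r 0 = f) (hr1 : r 1 = g)
    (hrec : ∀ i, i < N → r i = q (i + 1) * r (i + 1) + r (i + 2))
    (hdeg : ∀ i, 1 ≤ i → i ≤ N → (r (i + 1)).degree < (r i).degree)
    (hrN : r N ≠ 0) (hrN1 : r (N + 1) = 0)
    (hs0 : s 0 = 0) (hs1 : s 1 = 1)
    (hsrec : ∀ i, i < N → s (i + 2) = s i - q (i + 1) * s (i + 1))
    (ht0 : t 0 = 1) (ht1 : t 1 = 0)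
    (htrec : ∀ i, i < N → t (i + 2) = t i - q (i + 1) * t (i + 1))
    (hbez : ∀ i, i ≤ N + 1 → r i = g * s i + f * t i) :
    ∀ i, i + 1 ≤ N → ∀ a b : Polynomial K,
      f ∣ a - b * g ↔
        ∃! pq : Polynomial K × Polynomial K,
          (a, b) = (pq.1 * r i + pq.2 * r (i + 1),
                    pq.1 * s i + pq.2 * s (i + 1)) := by
  have hf0 : f ≠ 0 := by
    intro h
    rw [h, degree_zero] at hfg
    exact not_lt_bot hfg
  -- determinant identities for consecutive EEA rows
  have hD : ∀ j, j ≤ N → r j * s (j+1) - r (j+1) * s j = (-1:Polynomial K)^j * f := by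
    intro j
    induction j with
    | zero => intro _; simp [hr0, hr1, hs0, hs1]
    | succ j ih =>
      intro hj
      have hjN : j < N := hj
      have h1 := hrec j hjN
      have h2 := hsrec j hjN
      have h3 := ih hjN.le
      linear_combination s (j+1) * h1 + r (j+1) * h2 - h3
  have hR : ∀ j, j ≤ N → t j * r (j+1) - t (j+1) * r j = (-1:Polynomial K)^j * g := by
    intro j
    induction j with
    | zero => intro _; simp [hr0, hr1, ht0, ht1]
    | succ j ih =>
      intro hj
      have hjN : j < N := hj
      have h1 := hrec j hjN
      have h2 := htrec j hjN
      have h3 := ih hjN.le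
      linear_combination (-t (j+1)) * h1 + (-r (j+1)) * h2 - h3
  have hS : ∀ j, j ≤ N → t j * s (j+1) - t (j+1) * s j = (-1:Polynomial K)^j := by
    intro j
    induction j with
    | zero => intro _; simp [hs0, hs1, ht0, ht1]
    | succ j ih =>
      intro hj
      have hjN : j < N := hj
      have h1 := hsrec j hjN
      have h2 := htrec j hjN
      have h3 := ih hjN.le
      linear_combination t (j+1) * h1 + (-s (j+1)) * h2 - h3
  intro i hi a b
  have hiN : i ≤ N := by omega
  set e : Polynomial K := (-1)^i with he
  have hsq : e * e = 1 := by
    rw [he, ← pow_add, ← two_mul, pow_mul]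
    norm_num
  have hef0 : e * f ≠ 0 :=
    mul_ne_zero (pow_ne_zero _ (neg_ne_zero.mpr one_ne_zero)) hf0
  have hDi := hD i hiN
  have hRi := hR i hiN
  have hSi := hS i hiN
  have hbi := hbez i (by omega)
  have hbi1 := hbez (i+1) (by omega)
  constructor
  · rintro ⟨c, hc⟩
    refine ⟨(e * (c * s (i+1) - b * t (i+1)), e * (b * t i - c * s i)), ?_, ?_⟩
    · have h1 : a = e * (c * s (i+1) - b * t (i+1)) * r i
          + e * (b * t i - c * s i) * r (i+1) := by
        linear_combination (-(e*c)) * hDi - (e*b) * hRi + (e*e) * hc - a * hsq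
      have h2 : b = e * (c * s (i+1) - b * t (i+1)) * s i
          + e * (b * t i - c * s i) * s (i+1) := by
        linear_combination (-(e*b)) * hSi - b * hsq
      exact Prod.ext h1 h2
    · rintro ⟨p', q'⟩ hpq
      have ha : a = p' * r i + q' * r (i+1) := congrArg Prod.fst hpq
      have hb : b = p' * s i + q' * s (i+1) := congrArg Prod.snd hpq
      have hp : p' * (e * f) = e * (c * s (i+1) - b * t (i+1)) * (e * f) := by
        linear_combination (-p') * hDi - s (i+1) * ha + r (i+1) * hb + s (i+1) * hc
          - b * hbi1 - f * (c * s (i+1) - b * t (i+1)) * hsq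
      have hq : q' * (e * f) = e * (b * t i - c * s i) * (e * f) := by
        linear_combination (-q') * hDi + s i * ha - r i * hb - s i * hc
          + b * hbi - f * (b * t i - c * s i) * hsq
      have hp' := mul_right_cancel₀ hef0 hp
      have hq' := mul_right_cancel₀ hef0 hq
      exact Prod.ext hp' hq'
  · rintro ⟨⟨p, q₂⟩, hpq, -⟩
    have ha : a = p * r i + q₂ * r (i+1) := congrArg Prod.fst hpq
    have hb : b = p * s i + q₂ * s (i+1) := congrArg Prod.snd hpq
    refine ⟨p * t i + q₂ * t (i+1), ?_⟩
    linear_combination ha - g * hb + p * hbi + q₂ * hbi1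
end

section
/- Let f, g ∈ K[x] with n = deg f > deg g, and let {(a_1, b_1), (a_2, b_2)} be a basis of the K[x]-module Y = {(a, b) : f ∣ a − b·g} such that max{deg a_1, deg b_1} + max{deg a_2, deg b_2} = n. Then for every (a, b) ∈ Y, writing (a, b) = p·(a_1, b_1) + q·(a_2, b_2) with p, q ∈ K[x], one has deg p ≤ δ − μ_1 and deg q ≤ δ − μ_2, where δ = max{deg a, deg b}, μ_1 = max{deg a_1, deg b_1}, μ_2 = max{deg a_2, deg b_2}. -/
/-!
Since `(a₁, b₁), (a₂, b₂)` lie in `Y`, `a₁ b₂ - a₂ b₁ = (a₁ - b₁ g) b₂ - (a₂ - b₂ g) b₁` is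
divisible by `f`, and it is nonzero because the two rows are independent. Its degree is at most
`μ₁ + μ₂ = deg f`, so it equals `deg f` and its top coefficient, which is the determinant of the
leading coefficient vectors of the rows, is nonzero. Hence `p (a₁, b₁) + q (a₂, b₂)` has no
cancellation in degree `max (deg p + μ₁) (deg q + μ₂)`, which is therefore at most `δ`.
-/

open Polynomial

section TwoByTwo

variable {R : Type*} [CommRing R]

theorem eq_zero_and_eq_zero_of_det_ne_zero [NoZeroDivisors R] {x y α₁ α₂ β₁ β₂ : R}
    (hdet : α₁ * β₂ - α₂ * β₁ ≠ 0) (hα : x * α₁ + y * α₂ = 0) (hβ : x * β₁ + y * β₂ = 0) :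
    x = 0 ∧ y = 0 := by
  have hx : x * (α₁ * β₂ - α₂ * β₁) = 0 := by linear_combination β₂ * hα - α₂ * hβ
  have hy : y * (α₁ * β₂ - α₂ * β₁) = 0 := by linear_combination α₁ * hβ - β₁ * hα
  exact ⟨(mul_eq_zero.mp hx).resolve_right hdet, (mul_eq_zero.mp hy).resolve_right hdet⟩

theorem det_ne_zero_of_independent [Nontrivial R] {a₁ b₁ a₂ b₂ : R}
    (hind : ∀ P Q : R, P * a₁ + Q * a₂ = 0 → P * b₁ + Q * b₂ = 0 → P = 0 ∧ Q = 0) :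
    a₁ * b₂ - a₂ * b₁ ≠ 0 := by
  intro hdet
  obtain ⟨hb₂, hb₁⟩ := hind b₂ (-b₁) (by linear_combination hdet) (by ring)
  obtain ⟨ha₂, ha₁⟩ := hind a₂ (-a₁) (by ring) (by linear_combination -hdet)
  simpa [neg_eq_zero.mp ha₁, neg_eq_zero.mp hb₁] using hind 1 0

theorem dvd_det_of_dvd_sub_mul {f g a₁ b₁ a₂ b₂ : R} (h₁ : f ∣ a₁ - b₁ * g)
    (h₂ : f ∣ a₂ - b₂ * g) : f ∣ a₁ * b₂ - a₂ * b₁ := by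
  have hdet : a₁ * b₂ - a₂ * b₁ = (a₁ - b₁ * g) * b₂ - (a₂ - b₂ * g) * b₁ := by ring
  rw [hdet]
  exact dvd_sub (dvd_mul_of_dvd_left h₁ _) (dvd_mul_of_dvd_left h₂ _)

end TwoByTwo

namespace Polynomial

variable {R : Type*} [CommRing R]

theorem coeff_sub_ne_zero_of_degree_add_eq {p : R[X]} {m N : ℕ} (h : p.degree + m = N) :
    p.coeff (N - m) ≠ 0 := by
  have hp : p ≠ 0 := by rintro rfl; simp at h
  rw [degree_eq_natDegree hp] at h
  norm_cast at h
  rw [← h, Nat.add_sub_cancel, coeff_natDegree]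
  exact leadingCoeff_ne_zero.mpr hp

theorem coeff_mul_of_degree_add_le {p a : R[X]} {m N : ℕ} (ha : a.natDegree ≤ m)
    (hp : p.degree + m ≤ N) : (p * a).coeff N = p.coeff (N - m) * a.coeff m := by
  rcases eq_or_ne p 0 with rfl | hp0
  · simp
  rw [degree_eq_natDegree hp0] at hp
  norm_cast at hp
  have hN : N = (N - m) + m := by omega
  conv_lhs => rw [hN]
  exact coeff_mul_add_eq_of_natDegree_le (by omega) ha

theorem coeff_mul_sub_mul_of_natDegree_le {a₁ b₁ a₂ b₂ : R[X]} {m₁ m₂ : ℕ} (ha₁ : a₁.natDegree ≤ m₁)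
    (hb₁ : b₁.natDegree ≤ m₁) (ha₂ : a₂.natDegree ≤ m₂) (hb₂ : b₂.natDegree ≤ m₂) :
    (a₁ * b₂ - a₂ * b₁).coeff (m₁ + m₂)
      = a₁.coeff m₁ * b₂.coeff m₂ - a₂.coeff m₂ * b₁.coeff m₁ := by
  rw [coeff_sub, coeff_mul_add_eq_of_natDegree_le ha₁ hb₂, add_comm m₁,
    coeff_mul_add_eq_of_natDegree_le ha₂ hb₁]

/-- Predictable degree property: when the rows' leading coefficient vectors (in degrees `m₁`, `m₂`)
are independent, the top terms of `p • (a₁, b₁)` and `q • (a₂, b₂)` cannot cancel. -/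
theorem max_degree_add_le_of_coeff_det_ne_zero [NoZeroDivisors R] {a₁ b₁ a₂ b₂ : R[X]}
    {m₁ m₂ : ℕ} (ha₁ : a₁.natDegree ≤ m₁) (hb₁ : b₁.natDegree ≤ m₁) (ha₂ : a₂.natDegree ≤ m₂)
    (hb₂ : b₂.natDegree ≤ m₂) (hlead : a₁.coeff m₁ * b₂.coeff m₂ - a₂.coeff m₂ * b₁.coeff m₁ ≠ 0)
    (p q : R[X]) :
    max (p.degree + m₁) (q.degree + m₂)
      ≤ ((max (p * a₁ + q * a₂).natDegree (p * b₁ + q * b₂).natDegree : ℕ) : WithBot ℕ) := by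
  cases hN : max (p.degree + m₁) (q.degree + m₂) with
  | bot => exact bot_le
  | coe N =>
    have hp : p.degree + m₁ ≤ N := (le_max_left _ _).trans hN.le
    have hq : q.degree + m₂ ≤ N := (le_max_right _ _).trans hN.le
    have hcoeff {c d : R[X]} (hc : c.natDegree ≤ m₁) (hd : d.natDegree ≤ m₂) :
        (p * c + q * d).coeff N
          = p.coeff (N - m₁) * c.coeff m₁ + q.coeff (N - m₂) * d.coeff m₂ := by
      rw [coeff_add, coeff_mul_of_degree_add_le hc hp, coeff_mul_of_degree_add_le hd hq]
    have htop : p.coeff (N - m₁) ≠ 0 ∨ q.coeff (N - m₂) ≠ 0 := by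
      rcases max_choice (p.degree + m₁) (q.degree + m₂) with h | h <;> rw [h] at hN
      · exact .inl (coeff_sub_ne_zero_of_degree_add_eq hN)
      · exact .inr (coeff_sub_ne_zero_of_degree_add_eq hN)
    have hne : (p * a₁ + q * a₂).coeff N ≠ 0 ∨ (p * b₁ + q * b₂).coeff N ≠ 0 := by
      by_contra! h
      rw [hcoeff ha₁ ha₂, hcoeff hb₁ hb₂] at h
      have := eq_zero_and_eq_zero_of_det_ne_zero hlead h.1 h.2
      tauto
    rcases hne with h | h
    · exact WithBot.coe_le_coe.mpr ((le_natDegree_of_ne_zero h).trans (le_max_left _ _))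
    · exact WithBot.coe_le_coe.mpr ((le_natDegree_of_ne_zero h).trans (le_max_right _ _))

theorem coeff_det_ne_zero_of_dvd [NoZeroDivisors R] {f a₁ b₁ a₂ b₂ : R[X]} {m₁ m₂ : ℕ}
    (ha₁ : a₁.natDegree ≤ m₁) (hb₁ : b₁.natDegree ≤ m₁) (ha₂ : a₂.natDegree ≤ m₂)
    (hb₂ : b₂.natDegree ≤ m₂) (hdeg : m₁ + m₂ = f.natDegree) (hdet : a₁ * b₂ - a₂ * b₁ ≠ 0)
    (hdvd : f ∣ a₁ * b₂ - a₂ * b₁) :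
    a₁.coeff m₁ * b₂.coeff m₂ - a₂.coeff m₂ * b₁.coeff m₁ ≠ 0 := by
  have hle : (a₁ * b₂ - a₂ * b₁).natDegree ≤ m₁ + m₂ :=
    (natDegree_sub_le _ _).trans <| max_le (natDegree_mul_le_of_le ha₁ hb₂)
      (add_comm m₂ m₁ ▸ natDegree_mul_le_of_le ha₂ hb₁)
  have hge : m₁ + m₂ ≤ (a₁ * b₂ - a₂ * b₁).natDegree := hdeg ▸ natDegree_le_of_dvd hdvd hdet
  rw [← coeff_mul_sub_mul_of_natDegree_le ha₁ hb₁ ha₂ hb₂, ← le_antisymm hle hge, coeff_natDegree]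
  exact leadingCoeff_ne_zero.mpr hdet

end Polynomial

theorem statement10_general {K : Type*} [Field K] (f g a1 b1 a2 b2 : Polynomial K)
    (hbasis : ∀ a b : Polynomial K, f ∣ a - b * g ↔
      ∃! pq : Polynomial K × Polynomial K,
        (a, b) = (pq.1 * a1 + pq.2 * a2, pq.1 * b1 + pq.2 * b2))
    (hsum : max a1.natDegree b1.natDegree + max a2.natDegree b2.natDegree
      = f.natDegree) :
    ∀ a b p q : Polynomial K, f ∣ a - b * g →
      a = p * a1 + q * a2 → b = p * b1 + q * b2 →
      p.degree + (max a1.natDegree b1.natDegree : WithBot ℕ)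
          ≤ (max a.natDegree b.natDegree : WithBot ℕ) ∧
      q.degree + (max a2.natDegree b2.natDegree : WithBot ℕ)
          ≤ (max a.natDegree b.natDegree : WithBot ℕ) := by
  have hind : ∀ P Q : K[X], P * a1 + Q * a2 = 0 → P * b1 + Q * b2 = 0 → P = 0 ∧ Q = 0 := by
    intro P Q ha hb
    obtain ⟨_, -, huniq⟩ := (hbasis 0 0).mp (by simp)
    simpa using (huniq (P, Q) (by simp [ha, hb])).trans (huniq (0, 0) (by simp)).symm
  have hrepr (P Q : K[X]) : f ∣ (P * a1 + Q * a2) - (P * b1 + Q * b2) * g := by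
    refine (hbasis _ _).mpr ⟨(P, Q), rfl, fun ⟨P', Q'⟩ h => ?_⟩
    simp only [Prod.mk.injEq] at h ⊢
    have := hind (P' - P) (Q' - Q) (by linear_combination -h.1) (by linear_combination -h.2)
    exact ⟨sub_eq_zero.mp this.1, sub_eq_zero.mp this.2⟩
  have hlead := coeff_det_ne_zero_of_dvd (le_max_left _ _) (le_max_right _ _) (le_max_left _ _)
    (le_max_right _ _) hsum (det_ne_zero_of_independent hind)
    (dvd_det_of_dvd_sub_mul (by simpa using hrepr 1 0) (by simpa using hrepr 0 1))
  rintro a b p q - rfl rfl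
  exact max_le_iff.mp <| max_degree_add_le_of_coeff_det_ne_zero (le_max_left _ _)
    (le_max_right _ _) (le_max_left _ _) (le_max_right _ _) hlead p q

/-- if `{(a₁,b₁), (a₂,b₂)}` is a basis of `Y = {(a,b) : f ∣ a - b·g}` whose
δ-degrees `μ₁, μ₂` sum to `n = deg f`, then for every `(a,b) ∈ Y` written as
`(a,b) = p·(a₁,b₁) + q·(a₂,b₂)` one has `deg p ≤ δ - μ₁` and `deg q ≤ δ - μ₂`, where
`δ = max {deg a, deg b}` (stated additively in `WithBot ℕ`). -/
theorem statement10 {K : Type*} [Field K] (f g a1 b1 a2 b2 : Polynomial K)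
    (hfg : g.degree < f.degree)
    (hbasis : ∀ a b : Polynomial K, f ∣ a - b * g ↔
      ∃! pq : Polynomial K × Polynomial K,
        (a, b) = (pq.1 * a1 + pq.2 * a2, pq.1 * b1 + pq.2 * b2))
    (hsum : max a1.natDegree b1.natDegree + max a2.natDegree b2.natDegree
      = f.natDegree) :
    ∀ a b p q : Polynomial K, f ∣ a - b * g →
      a = p * a1 + q * a2 → b = p * b1 + q * b2 →
      p.degree + (max a1.natDegree b1.natDegree : WithBot ℕ)
          ≤ (max a.natDegree b.natDegree : WithBot ℕ) ∧
      q.degree + (max a2.natDegree b2.natDegree : WithBot ℕ)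
          ≤ (max a.natDegree b.natDegree : WithBot ℕ) :=
  statement10_general f g a1 b1 a2 b2 hbasis hsum
end

section
/- Let f, g ∈ K[x] with n = deg f > deg g, and suppose {(a_1, b_1), (a_2, b_2)} is a basis of Y = {(a, b) : f ∣ a − b·g} with max{deg a_1, deg b_1} + max{deg a_2, deg b_2} = n. Then the multiset {max{deg a_1, deg b_1}, max{deg a_2, deg b_2}} is the same for every such basis; i.e., any two bases of Y whose δ-degrees sum to n have the same pair of δ-degrees. -/
open Polynomial

/-- Facts extractable from the basis hypothesis: both basis vectors lie in `Y`,
and they are `K[x]`-linearly independent. -/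
lemma basis_facts {K : Type*} [Field K] (f g a1 b1 a2 b2 : Polynomial K)
    (hbasis : ∀ a b : Polynomial K, f ∣ a - b * g ↔
      ∃! pq : Polynomial K × Polynomial K,
        (a, b) = (pq.1 * a1 + pq.2 * a2, pq.1 * b1 + pq.2 * b2)) :
    (f ∣ a1 - b1 * g) ∧ (f ∣ a2 - b2 * g) ∧
      (∀ p q : Polynomial K, p * a1 + q * a2 = 0 → p * b1 + q * b2 = 0 →
        p = 0 ∧ q = 0) := by
  have h0 := (hbasis 0 0).mp (by simp)
  obtain ⟨w, hw, hu⟩ := h0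
  have hindep : ∀ p q : Polynomial K, p * a1 + q * a2 = 0 → p * b1 + q * b2 = 0 →
      p = 0 ∧ q = 0 := by
    intro p q hp hq
    have h1 : (p, q) = w := hu (p, q) (by simp [Prod.ext_iff, hp, hq])
    have h2 : ((0 : Polynomial K), (0 : Polynomial K)) = w := hu (0, 0) (by simp)
    have : (p, q) = ((0 : Polynomial K), (0 : Polynomial K)) := h1.trans h2.symm
    exact ⟨(Prod.ext_iff.mp this).1, (Prod.ext_iff.mp this).2⟩
  refine ⟨?_, ?_, hindep⟩
  · refine (hbasis a1 b1).mpr ⟨(1, 0), by simp, ?_⟩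
    rintro ⟨p, q⟩ hy
    simp only [Prod.ext_iff] at hy
    have := hindep (p - 1) q (by linear_combination -hy.1) (by linear_combination -hy.2)
    have hp : p = 1 := by linear_combination this.1
    exact Prod.ext hp this.2
  · refine (hbasis a2 b2).mpr ⟨(0, 1), by simp, ?_⟩
    rintro ⟨p, q⟩ hy
    simp only [Prod.ext_iff] at hy
    have := hindep p (q - 1) (by linear_combination -hy.1) (by linear_combination -hy.2)
    have hq : q = 1 := by linear_combination this.2
    exact Prod.ext this.1 hq

/-- Main inequality: the minimal δ-degree of the second basis is at most that of the
first one. -/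
lemma reduced_min_le_min {K : Type*} [Field K] (f g : Polynomial K)
    (hfg : g.degree < f.degree)
    (a1 b1 a2 b2 a1' b1' a2' b2' : Polynomial K)
    (hbasis : ∀ a b : Polynomial K, f ∣ a - b * g ↔
      ∃! pq : Polynomial K × Polynomial K,
        (a, b) = (pq.1 * a1 + pq.2 * a2, pq.1 * b1 + pq.2 * b2))
    (hbasis' : ∀ a b : Polynomial K, f ∣ a - b * g ↔
      ∃! pq : Polynomial K × Polynomial K,
        (a, b) = (pq.1 * a1' + pq.2 * a2', pq.1 * b1' + pq.2 * b2'))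
    (hsum' : max a1'.natDegree b1'.natDegree + max a2'.natDegree b2'.natDegree
      = f.natDegree) :
    min (max a1'.natDegree b1'.natDegree) (max a2'.natDegree b2'.natDegree)
      ≤ min (max a1.natDegree b1.natDegree) (max a2.natDegree b2.natDegree) := by
  by_contra hlt
  push_neg at hlt
  obtain ⟨hmem1, hmem2, hindep⟩ := basis_facts f g a1 b1 a2 b2 hbasis
  obtain ⟨hmem1', hmem2', hindep'⟩ := basis_facts f g a1' b1' a2' b2' hbasis'
  -- choose the unprimed basis vector (c, d) of minimal δ-degree
  have hne1 : ¬ (a1 = 0 ∧ b1 = 0) := by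
    rintro ⟨rfl, rfl⟩
    exact one_ne_zero (hindep 1 0 (by simp) (by simp)).1
  have hne2 : ¬ (a2 = 0 ∧ b2 = 0) := by
    rintro ⟨rfl, rfl⟩
    exact one_ne_zero (hindep 0 1 (by simp) (by simp)).2
  obtain ⟨c, d, hcd, hcd0, hδ⟩ :
      ∃ c d : Polynomial K, (f ∣ c - d * g) ∧ ¬ (c = 0 ∧ d = 0) ∧
        max c.natDegree d.natDegree
          = min (max a1.natDegree b1.natDegree) (max a2.natDegree b2.natDegree) := by
    rcases le_total (max a1.natDegree b1.natDegree) (max a2.natDegree b2.natDegree)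
      with h | h
    · exact ⟨a1, b1, hmem1, hne1, (min_eq_left h).symm⟩
    · exact ⟨a2, b2, hmem2, hne2, (min_eq_right h).symm⟩
  have hfne : f ≠ 0 := Polynomial.ne_zero_of_degree_gt hfg
  -- the determinant of two elements of Y is divisible by f
  have hdvd : ∀ a' b' : Polynomial K, f ∣ a' - b' * g → f ∣ c * b' - a' * d := by
    intro a' b' h
    have : c * b' - a' * d = (c - d * g) * b' - (a' - b' * g) * d := by ring
    rw [this]
    exact dvd_sub (hcd.mul_right _) (h.mul_right _)
  -- each such determinant has degree < n, hence vanishes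
  have hzero : ∀ a' b' : Polynomial K, f ∣ a' - b' * g →
      max a'.natDegree b'.natDegree
        ≤ max (max a1'.natDegree b1'.natDegree) (max a2'.natDegree b2'.natDegree) →
      c * b' - a' * d = 0 := by
    intro a' b' h hle
    by_contra hne
    have h1 : f.natDegree ≤ (c * b' - a' * d).natDegree :=
      Polynomial.natDegree_le_of_dvd (hdvd a' b' h) hne
    have h2 : (c * b' - a' * d).natDegree
        ≤ max (c * b').natDegree (a' * d).natDegree :=
      Polynomial.natDegree_sub_le _ _
    have h3 : (c * b').natDegree ≤ c.natDegree + b'.natDegree :=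
      Polynomial.natDegree_mul_le
    have h4 : (a' * d).natDegree ≤ a'.natDegree + d.natDegree :=
      Polynomial.natDegree_mul_le
    omega
  have hz1 : c * b1' - a1' * d = 0 := hzero a1' b1' hmem1' (by omega)
  have hz2 : c * b2' - a2' * d = 0 := hzero a2' b2' hmem2' (by omega)
  -- hence the primed determinant vanishes
  have hdet' : a1' * b2' - a2' * b1' = 0 := by
    by_cases hc : c = 0
    · have hd : d ≠ 0 := fun hd => hcd0 ⟨hc, hd⟩
      have hmul : d * (a1' * b2' - a2' * b1') = 0 := by
        linear_combination b1' * hz2 - b2' * hz1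
      exact (mul_eq_zero.mp hmul).resolve_left hd
    · have hmul : c * (a1' * b2' - a2' * b1') = 0 := by
        linear_combination a1' * hz2 - a2' * hz1
      exact (mul_eq_zero.mp hmul).resolve_left hc
  -- contradiction with independence of the primed basis
  have h1 := hindep' a2' (-a1') (by ring) (by linear_combination -hdet')
  have h2 := hindep' b2' (-b1') (by linear_combination hdet') (by ring)
  have ha1' : a1' = 0 := by have := h1.2; simpa using this
  have hb1' : b1' = 0 := by have := h2.2; simpa using this
  have h3 := hindep' 1 0 (by simp [ha1', h1.1]) (by simp [hb1', h2.1])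
  exact one_ne_zero h3.1

/-- any two bases of `Y = {(a,b) : f ∣ a - b·g}` whose δ-degrees sum to
`n = deg f` have the same multiset of δ-degrees. -/
theorem statement11 {K : Type*} [Field K] (f g : Polynomial K)
    (hfg : g.degree < f.degree)
    (a1 b1 a2 b2 a1' b1' a2' b2' : Polynomial K)
    (hbasis : ∀ a b : Polynomial K, f ∣ a - b * g ↔
      ∃! pq : Polynomial K × Polynomial K,
        (a, b) = (pq.1 * a1 + pq.2 * a2, pq.1 * b1 + pq.2 * b2))
    (hsum : max a1.natDegree b1.natDegree + max a2.natDegree b2.natDegree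
      = f.natDegree)
    (hbasis' : ∀ a b : Polynomial K, f ∣ a - b * g ↔
      ∃! pq : Polynomial K × Polynomial K,
        (a, b) = (pq.1 * a1' + pq.2 * a2', pq.1 * b1' + pq.2 * b2'))
    (hsum' : max a1'.natDegree b1'.natDegree + max a2'.natDegree b2'.natDegree
      = f.natDegree) :
    ({max a1.natDegree b1.natDegree, max a2.natDegree b2.natDegree} : Multiset ℕ)
      = {max a1'.natDegree b1'.natDegree, max a2'.natDegree b2'.natDegree} := by
  have h1 := reduced_min_le_min f g hfg a1 b1 a2 b2 a1' b1' a2' b2' hbasis hbasis' hsum'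
  have h2 := reduced_min_le_min f g hfg a1' b1' a2' b2' a1 b1 a2 b2 hbasis' hbasis hsum
  set x := max a1.natDegree b1.natDegree
  set y := max a2.natDegree b2.natDegree
  set x' := max a1'.natDegree b1'.natDegree
  set y' := max a2'.natDegree b2'.natDegree
  have : (x = x' ∧ y = y') ∨ (x = y' ∧ y = x') := by omega
  rcases this with ⟨h3, h4⟩ | ⟨h3, h4⟩
  · rw [h3, h4]
  · rw [h3, h4]
    exact Multiset.pair_comm _ _
end

section
/- Let {(a_1, b_1), (a_2, b_2)} be a minimal basis of Y (δ-degrees μ_1 ≤ μ_2 with μ_1 + μ_2 = n). Then b_1 and b_2 have no common root among {x_1, …, x_l}, i.e., there is no index j with b_1(x_j) = 0 = b_2(x_j). -/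
open Polynomial

/-- if `{(a₁,b₁), (a₂,b₂)}` is a minimal basis of `Y` (δ-degrees
`μ₁ ≤ μ₂` with `μ₁ + μ₂ = n`), then `b₁` and `b₂` have no common root among the
interpolation nodes `x₁, …, x_l`. -/
theorem statement12 {K : Type*} [Field K] [Infinite K] (l : ℕ) (x : Fin l → K)
    (hx : Function.Injective x) (nn : Fin l → ℕ) (hn : ∀ i, 0 < nn i)
    (hchar : ∀ (i : Fin l) (m : ℕ), 0 < m → m ≤ nn i → (m : K) ≠ 0)
    (f : Polynomial K) (hf : f = ∏ i, (X - C (x i)) ^ nn i)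
    (g : Polynomial K) (hgdeg : g.degree < f.degree)
    (a1 b1 a2 b2 : Polynomial K)
    (hbasis : ∀ a b : Polynomial K, f ∣ a - b * g ↔
      ∃! pq : Polynomial K × Polynomial K,
        (a, b) = (pq.1 * a1 + pq.2 * a2, pq.1 * b1 + pq.2 * b2))
    (hsum : max a1.natDegree b1.natDegree + max a2.natDegree b2.natDegree
      = f.natDegree)
    (hord : max a1.natDegree b1.natDegree ≤ max a2.natDegree b2.natDegree) :
    ∀ j : Fin l, ¬(b1.eval (x j) = 0 ∧ b2.eval (x j) = 0) := by
  rintro j ⟨h1, h2⟩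
  obtain ⟨⟨p, q⟩, hpq, -⟩ := (hbasis g 1).mp (by simp)
  have h := congrArg (fun r : Polynomial K × Polynomial K => r.2.eval (x j)) hpq
  simp [h1, h2] at h
end

section
/- Let {(a_1, b_1), (a_2, b_2)} be a minimal basis of Y with δ-degrees μ_1 < μ_2, and suppose gcd(a_1, b_1) = 1. Then b_1(x_i) ≠ 0 for every i = 1, …, l, and a_1/b_1 is the unique interpolating rational function of minimal δ-degree μ_1: every interpolating rational function y = a/b (in lowest terms) with max{deg a, deg b} ≤ μ_2 − 1 is equal to a_1/b_1. -/
open Polynomial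

/-- let `{(a₁,b₁), (a₂,b₂)}` be a minimal basis of `Y` with δ-degrees
`μ₁ < μ₂` and `gcd(a₁,b₁) = 1`.  Then `b₁(x_i) ≠ 0` for all `i`, and every interpolating
rational function `a/b` in lowest terms with `max {deg a, deg b} ≤ μ₂ - 1` equals
`a₁/b₁` (as a rational function: `a·b₁ = a₁·b`). -/
theorem statement13 {K : Type*} [Field K] [Infinite K] (l : ℕ) (x : Fin l → K)
    (hx : Function.Injective x) (nn : Fin l → ℕ) (hn : ∀ i, 0 < nn i)
    (hchar : ∀ (i : Fin l) (m : ℕ), 0 < m → m ≤ nn i → (m : K) ≠ 0)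
    (f : Polynomial K) (hf : f = ∏ i, (X - C (x i)) ^ nn i)
    (g : Polynomial K) (hgdeg : g.degree < f.degree)
    (a1 b1 a2 b2 : Polynomial K)
    (hbasis : ∀ a b : Polynomial K, f ∣ a - b * g ↔
      ∃! pq : Polynomial K × Polynomial K,
        (a, b) = (pq.1 * a1 + pq.2 * a2, pq.1 * b1 + pq.2 * b2))
    (hsum : max a1.natDegree b1.natDegree + max a2.natDegree b2.natDegree
      = f.natDegree)
    (hord : max a1.natDegree b1.natDegree < max a2.natDegree b2.natDegree)
    (hcop : IsCoprime a1 b1) :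
    (∀ i, b1.eval (x i) ≠ 0) ∧
      ∀ a b : Polynomial K, f ∣ a - b * g → (∀ i, b.eval (x i) ≠ 0) →
        IsCoprime a b →
        max a.natDegree b.natDegree < max a2.natDegree b2.natDegree →
        a * b1 = a1 * b := by
  classical
  have hf0 : f ≠ 0 := by
    rw [hf]
    exact (monic_prod_of_monic _ _ fun i _ => (monic_X_sub_C _).pow _).ne_zero
  -- kernel triviality of the map (p,q) ↦ (p a1 + q a2, p b1 + q b2)
  have hker : ∀ u v : Polynomial K, u * a1 + v * a2 = 0 → u * b1 + v * b2 = 0 →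
      u = 0 ∧ v = 0 := by
    intro u v h1 h2
    obtain ⟨pq, hpq, huniq⟩ := (hbasis f 0).mp (by simp)
    rw [Prod.mk.injEq] at hpq
    have h3 : (pq.1 + u, pq.2 + v) = pq := by
      apply huniq
      rw [Prod.mk.injEq]
      constructor
      · linear_combination hpq.1 - h1
      · linear_combination hpq.2 - h2
    rw [Prod.ext_iff] at h3
    constructor
    · have := h3.1
      simp only at this
      linear_combination this
    · have := h3.2
      simp only at this
      linear_combination this
  -- (a1, b1) and (a2, b2) belong to Y
  have hY1 : f ∣ a1 - b1 * g := by
    refine (hbasis a1 b1).mpr ⟨(1, 0), by simp, ?_⟩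
    intro y hy
    rw [Prod.mk.injEq] at hy
    obtain ⟨h1, h2⟩ := hker (y.1 - 1) y.2
      (by linear_combination -hy.1) (by linear_combination -hy.2)
    have : y.1 = 1 := by linear_combination h1
    exact Prod.ext this h2
  have hY2 : f ∣ a2 - b2 * g := by
    refine (hbasis a2 b2).mpr ⟨(0, 1), by simp, ?_⟩
    intro y hy
    rw [Prod.mk.injEq] at hy
    obtain ⟨h1, h2⟩ := hker y.1 (y.2 - 1)
      (by linear_combination -hy.1) (by linear_combination -hy.2)
    have : y.2 = 1 := by linear_combination h2
    exact Prod.ext h1 this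
  -- the determinant
  have hdvd : f ∣ a1 * b2 - a2 * b1 := by
    obtain ⟨c1, hc1⟩ := hY1
    obtain ⟨c2, hc2⟩ := hY2
    exact ⟨c1 * b2 - c2 * b1, by linear_combination b2 * hc1 - b1 * hc2⟩
  have hd0 : a1 * b2 - a2 * b1 ≠ 0 := by
    intro h
    obtain ⟨hb2, hb1⟩ := hker b2 (-b1) (by linear_combination h) (by ring)
    obtain ⟨ha2, ha1⟩ := hker a2 (-a1) (by ring) (by linear_combination -h)
    have hb1' : b1 = 0 := by linear_combination -hb1
    have ha1' : a1 = 0 := by linear_combination -ha1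
    obtain ⟨pq, hpq, -⟩ := (hbasis f 0).mp (by simp)
    rw [Prod.mk.injEq] at hpq
    apply hf0
    rw [hpq.1, ha1', ha2]
    ring
  constructor
  · -- b1 does not vanish at any x i
    intro i hb1
    have hfx : f.eval (x i) = 0 := by
      rw [hf, eval_prod]
      exact Finset.prod_eq_zero (Finset.mem_univ i)
        (by simp [zero_pow (hn i).ne'])
    have ha1 : a1.eval (x i) ≠ 0 := by
      obtain ⟨u, v, huv⟩ := hcop
      intro h
      have := congrArg (eval (x i)) huv
      simp [h, hb1] at this
    have hb2 : b2.eval (x i) = 0 := by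
      obtain ⟨c, hc⟩ := hdvd
      have := congrArg (eval (x i)) hc
      simp [hfx, hb1] at this
      rcases this with h | h
      · exact absurd h ha1
      · exact h
    obtain ⟨pq, hpq, -⟩ := (hbasis g 1).mp (by simp)
    rw [Prod.mk.injEq] at hpq
    have := congrArg (eval (x i)) hpq.2
    simp [hb1, hb2] at this
  · -- uniqueness of the minimal interpolating rational function
    intro a b hab _ _ hdeg
    obtain ⟨⟨p, q⟩, hpq, -⟩ := (hbasis a b).mp hab
    rw [Prod.mk.injEq] at hpq
    simp only at hpq
    have key : (a * b1 - a1 * b).natDegree < f.natDegree := by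
      have h1 := natDegree_sub_le (a * b1) (a1 * b)
      have h2 := natDegree_mul_le (p := a) (q := b1)
      have h3 := natDegree_mul_le (p := a1) (q := b)
      have h4 : a.natDegree ≤ max a.natDegree b.natDegree := le_max_left _ _
      have h5 : b.natDegree ≤ max a.natDegree b.natDegree := le_max_right _ _
      have h6 : a1.natDegree ≤ max a1.natDegree b1.natDegree := le_max_left _ _
      have h7 : b1.natDegree ≤ max a1.natDegree b1.natDegree := le_max_right _ _
      omega
    have hq : q = 0 := by
      by_contra hq
      have hid : a * b1 - a1 * b = -(q * (a1 * b2 - a2 * b1)) := by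
        linear_combination b1 * hpq.1 - a1 * hpq.2
      have h1 : (q * (a1 * b2 - a2 * b1)).natDegree
          = q.natDegree + (a1 * b2 - a2 * b1).natDegree := natDegree_mul hq hd0
      have h2 : f.natDegree ≤ (a1 * b2 - a2 * b1).natDegree :=
        natDegree_le_of_dvd hdvd hd0
      have h3 : (a * b1 - a1 * b).natDegree
          = (q * (a1 * b2 - a2 * b1)).natDegree := by rw [hid, natDegree_neg]
      omega
    rw [hq] at hpq
    linear_combination b1 * hpq.1 - a1 * hpq.2
end

section
/- If the index i ∈ {1,…,N} satisfies 2(deg q_1 + ⋯ + deg q_{i−1}) + deg q_i ≤ n ≤ 2(deg q_1 + ⋯ + deg q_i) + deg q_{i+1}, then max{deg r_i, deg s_i} + max{deg r_{i+1}, deg s_{i+1}} = n, so {(r_i, s_i), (r_{i+1}, s_{i+1})} is a minimal basis of Y = {(a, b) : f ∣ a − b·g}. -/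
open Polynomial Finset

/-- if the index `i ∈ {1,…,N}` satisfies
`2(deg q₁ + ⋯ + deg q_{i-1}) + deg q_i ≤ n ≤ 2(deg q₁ + ⋯ + deg q_i) + deg q_{i+1}`,
then `max{deg r_i, deg s_i} + max{deg r_{i+1}, deg s_{i+1}} = n`, and
`{(r_i,s_i), (r_{i+1},s_{i+1})}` is a (minimal) basis of `Y = {(a,b) : f ∣ a - b·g}`. -/
theorem statement14 {K : Type*} [Field K] (f g : Polynomial K)
    (hg0 : g ≠ 0) (hfg : g.degree < f.degree)
    (r q s t : ℕ → Polynomial K) (N : ℕ)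
    (hr0 : r 0 = f) (hr1 : r 1 = g)
    (hrec : ∀ i, i < N → r i = q (i + 1) * r (i + 1) + r (i + 2))
    (hdeg : ∀ i, 1 ≤ i → i ≤ N → (r (i + 1)).degree < (r i).degree)
    (hrN : r N ≠ 0) (hrN1 : r (N + 1) = 0)
    (hs0 : s 0 = 0) (hs1 : s 1 = 1)
    (hsrec : ∀ i, i < N → s (i + 2) = s i - q (i + 1) * s (i + 1))
    (ht0 : t 0 = 1) (ht1 : t 1 = 0)
    (htrec : ∀ i, i < N → t (i + 2) = t i - q (i + 1) * t (i + 1)) :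
    ∀ i, 1 ≤ i → i ≤ N →
      2 * (∑ j ∈ Icc 1 (i - 1), (q j).natDegree) + (q i).natDegree ≤ f.natDegree →
      f.natDegree ≤ 2 * (∑ j ∈ Icc 1 i, (q j).natDegree) + (q (i + 1)).natDegree →
      (max (r i).natDegree (s i).natDegree
          + max (r (i + 1)).natDegree (s (i + 1)).natDegree = f.natDegree) ∧
      ∀ a b : Polynomial K, f ∣ a - b * g ↔
        ∃! pq : Polynomial K × Polynomial K,
          (a, b) = (pq.1 * r i + pq.2 * r (i + 1),
                    pq.1 * s i + pq.2 * s (i + 1)) := by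
  have hf0 : f ≠ 0 := by
    intro h
    rw [h, degree_zero] at hfg
    exact not_lt_bot hfg
  -- strict degree drop at every step, including step 0
  have hdeg' : ∀ j, j < N → (r (j + 1)).degree < (r j).degree := by
    intro j hj
    rcases Nat.eq_zero_or_pos j with h0 | h1
    · subst h0; rw [hr0, hr1]; exact hfg
    · exact hdeg j h1 (le_of_lt hj)
  -- nonvanishing of remainders
  have hrne : ∀ j, j ≤ N → r j ≠ 0 := by
    intro j hj
    rcases eq_or_lt_of_le hj with h | h
    · subst h; exact hrN
    · intro h0
      have := hdeg' j h
      rw [h0, degree_zero] at this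
      exact not_lt_bot this
  -- quotients: nonzero and degree identity
  have hq : ∀ j, j < N → q (j + 1) ≠ 0 ∧
      (r j).degree = (q (j + 1)).degree + (r (j + 1)).degree := by
    intro j hj
    have hA : (r (j + 1)).degree < (r j).degree := hdeg' j hj
    have hB : (r (j + 2)).degree < (r (j + 1)).degree := hdeg (j + 1) (by omega) (by omega)
    have hq0 : q (j + 1) ≠ 0 := by
      intro h0
      have := hrec j hj
      rw [h0, zero_mul, zero_add] at this
      rw [← this] at hB
      exact absurd (hB.trans hA) (lt_irrefl _)
    have hlt : (r (j + 2)).degree < (q (j + 1) * r (j + 1)).degree := by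
      rw [degree_mul]
      refine hB.trans_le ?_
      exact le_add_of_nonneg_left (zero_le_degree_iff.mpr hq0)
    have : (r j).degree = (q (j + 1) * r (j + 1)).degree := by
      rw [hrec j hj]
      exact degree_add_eq_left_of_degree_lt hlt
    exact ⟨hq0, by rw [this, degree_mul]⟩
  -- natDegree version
  have hqn : ∀ j, j < N →
      (r j).natDegree = (q (j + 1)).natDegree + (r (j + 1)).natDegree := by
    intro j hj
    obtain ⟨hq0, hqd⟩ := hq j hj
    have h1 : r (j + 1) ≠ 0 := hrne (j + 1) (by omega)
    have h2 : r j ≠ 0 := hrne j (le_of_lt hj)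
    rw [degree_eq_natDegree h2, degree_eq_natDegree hq0, degree_eq_natDegree h1,
      ← Nat.cast_add] at hqd
    exact_mod_cast hqd
  have hqpos : ∀ j, j < N → 1 ≤ (q (j + 1)).natDegree := by
    intro j hj
    have h1 : r (j + 1) ≠ 0 := hrne (j + 1) (by omega)
    have hlt : (r (j + 1)).natDegree < (r j).natDegree :=
      natDegree_lt_natDegree h1 (hdeg' j hj)
    have := hqn j hj
    omega
  -- degree of f equals degree of r j plus sum of quotient degrees
  have hsum : ∀ j, j ≤ N →
      f.natDegree = (r j).natDegree + ∑ k ∈ Icc 1 j, (q k).natDegree := by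
    intro j
    induction j with
    | zero => intro _; simp [hr0]
    | succ j ih =>
      intro hj
      have hjN : j < N := by omega
      have h1 := ih (le_of_lt hjN)
      have h2 := hqn j hjN
      rw [Finset.sum_Icc_succ_top (by omega : 1 ≤ j + 1)]
      omega
  -- degrees of the cofactors s: strictly increasing, with explicit value
  have hsinv : ∀ j, 1 ≤ j → j ≤ N →
      (s j).degree < (s (j + 1)).degree ∧
      (s (j + 1)).degree = ((∑ k ∈ Icc 1 j, (q k).natDegree : ℕ) : WithBot ℕ) := by
    intro j hj1 hjN
    induction j, hj1 using Nat.le_induction with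
    | base =>
      have h0N : 0 < N := hjN
      have hs2 : s 2 = -(q 1) := by
        have := hsrec 0 h0N
        rw [hs0, hs1, mul_one] at this
        rw [this]; ring
      obtain ⟨hq0, _⟩ := hq 0 h0N
      have hd2 : (s 2).degree = ((q 1).natDegree : WithBot ℕ) := by
        rw [hs2, degree_neg, degree_eq_natDegree hq0]
      constructor
      · rw [hs1, degree_one, hd2]
        exact_mod_cast hqpos 0 h0N
      · rw [hd2]; simp
    | succ j hj1 ih =>
      have hjN' : j < N := by omega
      obtain ⟨hlt, hdval⟩ := ih (by omega)
      obtain ⟨hq0, _⟩ := hq j hjN'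
      have hs1ne : s (j + 1) ≠ 0 := by
        intro h0
        rw [h0, degree_zero] at hdval
        exact absurd hdval.symm (Ne.symm (ne_of_beq_false rfl))
      have hmul : (q (j + 1) * s (j + 1)).degree =
          (((q (j + 1)).natDegree + ∑ k ∈ Icc 1 j, (q k).natDegree : ℕ) : WithBot ℕ) := by
        rw [degree_mul, hdval, degree_eq_natDegree hq0, ← Nat.cast_add]
      have hltm : (s j).degree < (q (j + 1) * s (j + 1)).degree := by
        refine hlt.trans_le ?_
        rw [degree_mul]
        exact le_add_of_nonneg_left (zero_le_degree_iff.mpr hq0)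
      have hrecs : s (j + 2) = s j - q (j + 1) * s (j + 1) := hsrec j hjN'
      have hd3 : (s (j + 2)).degree = (q (j + 1) * s (j + 1)).degree := by
        rw [hrecs, degree_sub_eq_right_of_degree_lt hltm]
      constructor
      · rw [hd3, hdval, hmul]
        have := hqpos j hjN'
        exact_mod_cast (by omega : (∑ k ∈ Icc 1 j, (q k).natDegree) <
          (q (j + 1)).natDegree + ∑ k ∈ Icc 1 j, (q k).natDegree)
      · rw [hd3, hmul, Finset.sum_Icc_succ_top (by omega : 1 ≤ j + 1)]
        norm_num
        ring
  have hsn : ∀ j, 1 ≤ j → j ≤ N →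
      (s (j + 1)).natDegree = ∑ k ∈ Icc 1 j, (q k).natDegree := by
    intro j hj1 hjN
    exact natDegree_eq_of_degree_eq_some (hsinv j hj1 hjN).2
  -- natDegree of s i for 1 ≤ i
  have hsni : ∀ j, 1 ≤ j → j ≤ N →
      (s j).natDegree = ∑ k ∈ Icc 1 (j - 1), (q k).natDegree := by
    intro j hj1 hjN
    rcases eq_or_lt_of_le hj1 with h | h
    · rw [← h, hs1]
      simp
    · have : j - 1 + 1 = j := by omega
      rw [← this]
      simp only [Nat.add_sub_cancel]
      exact hsn (j - 1) (by omega) (by omega)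
  -- Bezout identity
  have hbez2 : ∀ j, j ≤ N →
      (r j = t j * f + s j * g ∧ r (j + 1) = t (j + 1) * f + s (j + 1) * g) := by
    intro j
    induction j with
    | zero =>
      intro _
      exact ⟨by rw [hr0, ht0, hs0]; ring, by rw [hr1, ht1, hs1]; ring⟩
    | succ j ih =>
      intro hj
      obtain ⟨h1, h2⟩ := ih (by omega)
      refine ⟨h2, ?_⟩
      have hrj := hrec j (by omega)
      rw [hsrec j (by omega), htrec j (by omega)]
      linear_combination h1 - q (j + 1) * h2 - hrj
  have hbez : ∀ j, j ≤ N + 1 → r j = t j * f + s j * g := by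
    intro j hj
    rcases Nat.eq_zero_or_pos j with h0 | h1
    · subst h0; exact (hbez2 0 (by omega)).1
    · obtain ⟨m, rfl⟩ : ∃ m, j = m + 1 := ⟨j - 1, by omega⟩
      exact (hbez2 m (by omega)).2
  -- determinant identity
  have hdet : ∀ j, j ≤ N → s j * t (j + 1) - s (j + 1) * t j = (-1) ^ (j + 1) := by
    intro j
    induction j with
    | zero =>
      intro _
      rw [hs0, hs1, ht0, ht1]
      ring
    | succ j ih =>
      intro hj
      have ihj := ih (by omega)
      rw [hsrec j (by omega), htrec j (by omega), pow_succ]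
      linear_combination -ihj
  intro i hi1 hiN hlow hhigh
  -- key determinant identities at index i
  have hdeti : s i * t (i + 1) - s (i + 1) * t i = (-1) ^ i * (-1) := by
    rw [← pow_succ]
    exact hdet i hiN
  have hb1 : r i = t i * f + s i * g := hbez i (by omega)
  have hb2 : r (i + 1) = t (i + 1) * f + s (i + 1) * g := hbez (i + 1) (by omega)
  have hkey : r i * s (i + 1) - r (i + 1) * s i = (-1) ^ i * f := by
    linear_combination s (i + 1) * hb1 - s i * hb2 - f * hdeti
  have hkey2 : t i * r (i + 1) - t (i + 1) * r i = (-1) ^ i * g := by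
    linear_combination t i * hb2 - t (i + 1) * hb1 - g * hdeti
  have heps : ((-1 : Polynomial K) ^ i) * ((-1 : Polynomial K) ^ i) = 1 := by
    rw [← mul_pow]; norm_num
  constructor
  · -- degree statement
    have hSi : ∑ k ∈ Icc 1 i, (q k).natDegree =
        (∑ k ∈ Icc 1 (i - 1), (q k).natDegree) + (q i).natDegree := by
      have : i - 1 + 1 = i := by omega
      rw [← this, Finset.sum_Icc_succ_top (by omega : 1 ≤ i - 1 + 1), this]
    have hri := hsum i hiN
    have hsi := hsni i hi1 hiN
    have hsi1 := hsn i hi1 hiN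
    have hmax1 : max (r i).natDegree (s i).natDegree = (r i).natDegree := by
      rw [max_eq_left]
      omega
    rcases eq_or_lt_of_le hiN with hNi | hNi
    · -- i = N
      have hmax2 : max (r (i + 1)).natDegree (s (i + 1)).natDegree
          = (s (i + 1)).natDegree := by
        rw [← hNi] at hrN1
        rw [hrN1]
        simp
      rw [hmax1, hmax2]
      omega
    · have hri1 := hsum (i + 1) hNi
      rw [Finset.sum_Icc_succ_top (by omega : 1 ≤ i + 1)] at hri1
      have hmax2 : max (r (i + 1)).natDegree (s (i + 1)).natDegree
          = (s (i + 1)).natDegree := by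
        rw [max_eq_right]
        omega
      rw [hmax1, hmax2]
      omega
  · -- basis statement
    intro a b
    constructor
    · rintro ⟨c, hc⟩
      refine ⟨((-1) ^ i * (s (i + 1) * c - t (i + 1) * b),
               (-1) ^ i * (t i * b - s i * c)), ?_, ?_⟩
      · have hA : a = ((-1) ^ i * (s (i + 1) * c - t (i + 1) * b)) * r i
            + ((-1) ^ i * (t i * b - s i * c)) * r (i + 1) := by
          linear_combination hc - ((-1 : Polynomial K) ^ i * c) * hkey
            - ((-1 : Polynomial K) ^ i * b) * hkey2 - (f * c + g * b) * heps
        have hB : b = ((-1) ^ i * (s (i + 1) * c - t (i + 1) * b)) * s i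
            + ((-1) ^ i * (t i * b - s i * c)) * s (i + 1) := by
          linear_combination ((-1 : Polynomial K) ^ i * b) * hdeti - b * heps
        exact Prod.ext hA hB
      · rintro ⟨p1, p2⟩ hp
        obtain ⟨ha, hb⟩ := Prod.mk.injEq .. ▸ hp
        simp only at ha hb
        have hA : a = ((-1) ^ i * (s (i + 1) * c - t (i + 1) * b)) * r i
            + ((-1) ^ i * (t i * b - s i * c)) * r (i + 1) := by
          linear_combination hc - ((-1 : Polynomial K) ^ i * c) * hkey
            - ((-1 : Polynomial K) ^ i * b) * hkey2 - (f * c + g * b) * heps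
        have hB : b = ((-1) ^ i * (s (i + 1) * c - t (i + 1) * b)) * s i
            + ((-1) ^ i * (t i * b - s i * c)) * s (i + 1) := by
          linear_combination ((-1 : Polynomial K) ^ i * b) * hdeti - b * heps
        have hfne : ((-1 : Polynomial K) ^ i * f) ≠ 0 := by
          apply mul_ne_zero _ hf0
          exact pow_ne_zero _ (by norm_num)
        set P := (-1 : Polynomial K) ^ i * (s (i + 1) * c - t (i + 1) * b) with hP
        set Q := (-1 : Polynomial K) ^ i * (t i * b - s i * c) with hQ
        have hz1 : (p1 - P) * r i + (p2 - Q) * r (i + 1) = 0 := by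
          linear_combination hA - ha
        have hz2 : (p1 - P) * s i + (p2 - Q) * s (i + 1) = 0 := by
          linear_combination hB - hb
        have h3 : (p1 - P) * ((-1) ^ i * f) = 0 := by
          linear_combination s (i + 1) * hz1 - r (i + 1) * hz2 - (p1 - P) * hkey
        have h4 : (p2 - Q) * ((-1) ^ i * f) = 0 := by
          linear_combination r i * hz2 - s i * hz1 - (p2 - Q) * hkey
        have e1 : p1 = P := sub_eq_zero.mp ((mul_eq_zero.mp h3).resolve_right hfne)
        have e2 : p2 = Q := sub_eq_zero.mp ((mul_eq_zero.mp h4).resolve_right hfne)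
        rw [Prod.mk.injEq]
        exact ⟨e1, e2⟩
    · rintro ⟨pq, hp, -⟩
      obtain ⟨ha, hb⟩ := Prod.ext_iff.mp hp
      exact ⟨pq.1 * t i + pq.2 * t (i + 1), by
        linear_combination ha - g * hb + pq.1 * hb1 + pq.2 * hb2⟩
end

section
/- For the polynomial plane parametrization t ↦ (t^n, t^m) with 0 < m ≤ n, the syzygy module of (x^n, x^m, 1) over K[x], i.e. {(a, b, c) ∈ K[x]^3 : a·x^n + b·x^m + c = 0}, is free with basis {(0, 1, −x^m), (1, −x^{n−m}, 0)}; consequently the minimal degree μ of a moving line following the parametrization equals min(m, n − m). -/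
open Polynomial

/-- for the parametrization `t ↦ (tⁿ, tᵐ)` with `0 < m ≤ n`, the syzygy
module `{(a,b,c) : a·xⁿ + b·xᵐ + c = 0}` is free with basis
`{(0, 1, -xᵐ), (1, -x^{n-m}, 0)}`, and the minimal degree `μ` of a nonzero moving line
following the parametrization is `min (m, n - m)`. -/
theorem statement17 {K : Type*} [Field K] (m n : ℕ) (hm : 0 < m) (hmn : m ≤ n) :
    (∀ a b c : Polynomial K,
      a * X ^ n + b * X ^ m + c = 0 ↔
        ∃! pq : Polynomial K × Polynomial K,
          (a, b, c) = (pq.2, pq.1 - pq.2 * X ^ (n - m), -(pq.1 * X ^ m))) ∧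
    IsLeast {d : ℕ | ∃ a b c : Polynomial K, ¬(a = 0 ∧ b = 0 ∧ c = 0) ∧
        a * X ^ n + b * X ^ m + c = 0 ∧
        max (max a.natDegree b.natDegree) c.natDegree = d}
      (min m (n - m)) := by
  have hx : (X : K[X]) ^ (n - m) * X ^ m = X ^ n := by
    rw [← pow_add, Nat.sub_add_cancel hmn]
  constructor
  · intro a b c
    constructor
    · intro h
      refine ⟨(b + a * X ^ (n - m), a), ?_, ?_⟩
      · have hc : c = -(a * X ^ n + b * X ^ m) := by
          rw [eq_neg_iff_add_eq_zero, add_comm]; exact h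
        simp only [Prod.mk.injEq]
        refine ⟨trivial, by ring, ?_⟩
        rw [hc, ← hx]; ring
      · rintro ⟨p, q⟩ hpq
        simp only [Prod.mk.injEq] at hpq
        obtain ⟨ha, hb, -⟩ := hpq
        simp only [Prod.mk.injEq]
        constructor
        · rw [hb, ha]; ring
        · exact ha.symm
    · rintro ⟨⟨p, q⟩, hpq, -⟩
      simp only [Prod.mk.injEq] at hpq
      obtain ⟨ha, hb, hc⟩ := hpq
      rw [ha, hb, hc, ← hx]; ring
  · constructor
    · rcases le_total m (n - m) with h | h
      · refine ⟨0, 1, -X ^ m, by simp, by ring, ?_⟩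
        simp [natDegree_X_pow, min_eq_left h]
      · refine ⟨1, -X ^ (n - m), 0, by simp, ?_, ?_⟩
        · rw [neg_mul, hx]; ring
        · simp [natDegree_X_pow, min_eq_right h]
    · rintro d ⟨a, b, c, hne, heq, hd⟩
      by_contra hlt
      push_neg at hlt
      have hda : a.natDegree ≤ d := hd ▸ le_max_of_le_left (le_max_left _ _)
      have hdb : b.natDegree ≤ d := hd ▸ le_max_of_le_left (le_max_right _ _)
      have hdc : c.natDegree ≤ d := hd ▸ le_max_right _ _
      have hdm : d < m := lt_of_lt_of_le hlt (min_le_left _ _)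
      have hdnm : d < n - m := lt_of_lt_of_le hlt (min_le_right _ _)
      have ha : a = 0 := by
        by_contra ha0
        have h1 : c + b * X ^ m = -(a * X ^ n) := by
          rw [eq_neg_iff_add_eq_zero]; linear_combination heq
        have h2 : (-(a * X ^ n)).natDegree = a.natDegree + n := by
          rw [natDegree_neg, natDegree_mul ha0 (pow_ne_zero _ X_ne_zero), natDegree_X_pow]
        have h3 : (c + b * X ^ m).natDegree ≤ d + m := by
          refine natDegree_add_le_of_degree_le (le_trans hdc ?_) ?_
          · exact le_add_of_nonneg_right (Nat.zero_le _)
          · have h4 : (b * X ^ m).natDegree ≤ b.natDegree + m := by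
              have := natDegree_mul_le (p := b) (q := (X : K[X]) ^ m)
              rwa [natDegree_X_pow] at this
            omega
        rw [h1, h2] at h3
        omega
      have hb : b = 0 := by
        by_contra hb0
        have h1 : c = -(b * X ^ m) := by
          rw [eq_neg_iff_add_eq_zero]; linear_combination heq - congrArg (· * X ^ n) ha
        have h2 : c.natDegree = b.natDegree + m := by
          rw [h1, natDegree_neg, natDegree_mul hb0 (pow_ne_zero _ X_ne_zero), natDegree_X_pow]
        omega
      have hc : c = 0 := by
        have := heq; rw [ha, hb] at this; simpa using this
      exact hne ⟨ha, hb, hc⟩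
end

section
/- (Minimal κ-degree is attained by a single EEA fraction) Let y = a/b with gcd(a,b) = 1 be an interpolating rational function written via Antoulas' decomposition as a = Σ m_i r_i, b = Σ m_i s_i with deg m_i < deg q_i for 1 ≤ i ≤ N. Let k = min{i : m_i ≠ 0} and k' = max{i : m_i ≠ 0}. Then deg a + deg b = (deg r_k + deg m_k) + (deg s_{k'} + deg m_{k'}); in particular deg a + deg b ≥ n − deg q_k if k = k', and deg a + deg b ≥ n if k' > k. -/
open Polynomial Finset

/-- Degree of a sum equals the degree of a single dominant term. -/
lemma degree_sum_eq_of_lt' {K : Type*} [Field K] (S : Finset ℕ) (F : ℕ → Polynomial K)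
    (k : ℕ) (hkS : k ∈ S) (h0 : F k ≠ 0)
    (h : ∀ i ∈ S, i ≠ k → (F i).degree < (F k).degree) :
    (∑ i ∈ S, F i).degree = (F k).degree := by
  rw [← Finset.add_sum_erase S F hkS]
  apply degree_add_eq_left_of_degree_lt
  apply lt_of_le_of_lt (degree_sum_le _ _)
  rw [Finset.sup_lt_iff (bot_lt_iff_ne_bot.mpr (fun hbot => h0 (degree_eq_bot.mp hbot)))]
  intro i hi
  exact h i (Finset.mem_of_mem_erase hi) (Finset.ne_of_mem_erase hi)

/-- let `a/b` (in lowest terms) be an interpolating rational function,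
written via Antoulas' decomposition as `a = Σ mᵢ rᵢ`, `b = Σ mᵢ sᵢ` with
`deg mᵢ < deg qᵢ` for `1 ≤ i ≤ N`; let `k, k'` be the smallest and largest indices with
`mᵢ ≠ 0`.  Then `deg a + deg b = (deg r_k + deg m_k) + (deg s_{k'} + deg m_{k'})`; in
particular `deg a + deg b ≥ n - deg q_k` if `k = k'`, and `deg a + deg b ≥ n` if
`k < k'`. -/
theorem statement18 {K : Type*} [Field K] [Infinite K] (l : ℕ) (x : Fin l → K)
    (hx : Function.Injective x) (nn : Fin l → ℕ) (hn : ∀ i, 0 < nn i)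
    (hchar : ∀ (i : Fin l) (m : ℕ), 0 < m → m ≤ nn i → (m : K) ≠ 0)
    (f : Polynomial K) (hf : f = ∏ i, (X - C (x i)) ^ nn i)
    (g : Polynomial K) (hg0 : g ≠ 0) (hgdeg : g.degree < f.degree)
    (r q s t : ℕ → Polynomial K) (N : ℕ)
    (hr0 : r 0 = f) (hr1 : r 1 = g)
    (hrec : ∀ i, i < N → r i = q (i + 1) * r (i + 1) + r (i + 2))
    (hdeg : ∀ i, 1 ≤ i → i ≤ N → (r (i + 1)).degree < (r i).degree)
    (hrN : r N ≠ 0) (hrN1 : r (N + 1) = 0)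
    (hs0 : s 0 = 0) (hs1 : s 1 = 1)
    (hsrec : ∀ i, i < N → s (i + 2) = s i - q (i + 1) * s (i + 1))
    (ht0 : t 0 = 1) (ht1 : t 1 = 0)
    (htrec : ∀ i, i < N → t (i + 2) = t i - q (i + 1) * t (i + 1))
    (a b : Polynomial K) (hcop : IsCoprime a b)
    (hint : f ∣ a - b * g) (hbev : ∀ i, b.eval (x i) ≠ 0)
    (m : ℕ → Polynomial K)
    (hsupp : ∀ i, N + 1 < i → m i = 0)
    (hmdeg : ∀ i, 1 ≤ i → i ≤ N → (m i).degree < (q i).degree)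
    (ha : a = ∑ i ∈ range (N + 2), m i * r i)
    (hb : b = ∑ i ∈ range (N + 2), m i * s i)
    (k k' : ℕ)
    (hk : m k ≠ 0 ∧ ∀ i, i < k → m i = 0)
    (hk' : m k' ≠ 0 ∧ ∀ i, k' < i → m i = 0) :
    a.natDegree + b.natDegree
        = ((r k).natDegree + (m k).natDegree)
          + ((s k').natDegree + (m k').natDegree) ∧
      (k' = k → f.natDegree - (q k).natDegree ≤ a.natDegree + b.natDegree) ∧
      (k < k' → f.natDegree ≤ a.natDegree + b.natDegree) := by
  -- basic facts about r
  have Dstep : ∀ i, i ≤ N → (r (i + 1)).degree < (r i).degree := by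
    intro i hi
    rcases Nat.eq_zero_or_pos i with rfl | h
    · simpa [hr0, hr1] using hgdeg
    · exact hdeg i h hi
  have Dmono : ∀ i j, i ≤ j → j ≤ N + 1 → (r j).degree ≤ (r i).degree := by
    intro i j hij
    induction j, hij using Nat.le_induction with
    | base => intro _; exact le_rfl
    | succ j hij ih => intro hj; exact le_trans (Dstep j (by omega)).le (ih (by omega))
  have rne : ∀ i, i ≤ N → r i ≠ 0 := by
    intro i hi h0
    have h1 := Dmono i N hi (by omega)
    rw [h0, degree_zero, le_bot_iff, degree_eq_bot] at h1
    exact hrN h1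
  have dmono : ∀ i j, i ≤ j → j ≤ N + 1 → (r j).natDegree ≤ (r i).natDegree :=
    fun i j hij hj => natDegree_le_natDegree (Dmono i j hij hj)
  have dstep : ∀ i, i + 1 ≤ N → (r (i + 1)).natDegree < (r i).natDegree :=
    fun i hi => natDegree_lt_natDegree (rne _ hi) (Dstep i (by omega))
  -- facts about q
  have hq : ∀ i, i + 1 ≤ N → q (i + 1) ≠ 0 ∧
      (q (i + 1)).natDegree + (r (i + 1)).natDegree = (r i).natDegree := by
    intro i hi
    have hlt : (r (i + 2)).degree < (r i).degree :=
      lt_of_lt_of_le (Dstep (i + 1) hi) (Dmono i (i + 1) (by omega) (by omega))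
    have he : q (i + 1) * r (i + 1) = r i - r (i + 2) := by
      have h := hrec i (by omega); rw [h]; ring
    have hdq : (q (i + 1) * r (i + 1)).degree = (r i).degree := by
      rw [he, degree_sub_eq_left_of_degree_lt hlt]
    have hq0 : q (i + 1) ≠ 0 := by
      intro h; rw [h, zero_mul, degree_zero] at hdq
      exact rne i (by omega) (degree_eq_bot.mp hdq.symm)
    refine ⟨hq0, ?_⟩
    rw [← natDegree_mul hq0 (rne (i + 1) hi)]
    exact natDegree_eq_of_degree_eq hdq
  -- facts about s
  have hs : ∀ i, i ≤ N → s (i + 1) ≠ 0 ∧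
      (s (i + 1)).natDegree + (r i).natDegree = f.natDegree := by
    intro i
    induction i using Nat.strong_induction_on with
    | _ i ih =>
      intro hi
      match i, hi with
      | 0, hi => exact ⟨by simp [hs1], by simp [hs1, hr0]⟩
      | 1, hi =>
        have h2 : s 2 = -(q 1) := by rw [hsrec 0 (by omega), hs0, hs1]; ring
        obtain ⟨hq0, hqe⟩ := hq 0 (by omega)
        refine ⟨by rw [h2]; simpa using hq0, ?_⟩
        rw [h2, natDegree_neg]
        rw [hr0] at hqe
        simpa using hqe
      | (i + 2), hi =>
        obtain ⟨hsA, heA⟩ := ih i (by omega) (by omega)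
        obtain ⟨hsB0, heB0⟩ := ih (i + 1) (by omega) (by omega)
        have hsB : s (i + 2) ≠ 0 := hsB0
        have heB : (s (i + 2)).natDegree + (r (i + 1)).natDegree = f.natDegree := heB0
        obtain ⟨hqC00, hqCe0⟩ := hq (i + 1) (by omega)
        have hqC0 : q (i + 2) ≠ 0 := hqC00
        have hqCe : (q (i + 2)).natDegree + (r (i + 2)).natDegree = (r (i + 1)).natDegree :=
          hqCe0
        have hrec' : s (i + 3) = s (i + 1) - q (i + 2) * s (i + 2) := hsrec (i + 1) (by omega)
        have hd : (r (i + 2)).natDegree < (r i).natDegree :=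
          lt_of_lt_of_le (dstep (i + 1) (by omega)) (dmono i (i + 1) (by omega) (by omega))
        have hprod0 : q (i + 2) * s (i + 2) ≠ 0 := mul_ne_zero hqC0 hsB
        have hprodd : (q (i + 2) * s (i + 2)).natDegree
            = (q (i + 2)).natDegree + (s (i + 2)).natDegree := natDegree_mul hqC0 hsB
        have hlt : (s (i + 1)).degree < (q (i + 2) * s (i + 2)).degree := by
          rw [← natDegree_lt_natDegree_iff hsA, hprodd]
          omega
        have hdeq : (s (i + 3)).degree = (q (i + 2) * s (i + 2)).degree := by
          rw [hrec']; exact degree_sub_eq_right_of_degree_lt hlt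
        constructor
        · intro h0; rw [h0, degree_zero] at hdeq
          exact hprod0 (degree_eq_bot.mp hdeq.symm)
        · have hnd : (s (i + 3)).natDegree = (q (i + 2)).natDegree + (s (i + 2)).natDegree := by
            rw [← hprodd]; exact natDegree_eq_of_degree_eq hdeq
          show (s (i + 3)).natDegree + (r (i + 2)).natDegree = f.natDegree
          omega
  -- bounds on k, k'
  have hk'le : k' ≤ N + 1 := by by_contra h; exact hk'.1 (hsupp k' (by omega))
  have hkk' : k ≤ k' := by by_contra h; exact hk.1 (hk'.2 k (by omega))
  have hk'1 : 1 ≤ k' := by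
    rcases Nat.eq_zero_or_pos k' with h0 | h
    swap
    · exact h
    exfalso
    have hb0 : b = 0 := by
      rw [hb]; apply Finset.sum_eq_zero; intro i _
      rcases Nat.eq_zero_or_pos i with rfl | hip
      · rw [hs0, mul_zero]
      · rw [hk'.2 i (by omega), zero_mul]
    have hcop' := hcop
    rw [hb0] at hcop'
    have hua : IsUnit a := isCoprime_zero_right.mp hcop'
    have hfa : f ∣ a := by
      have h1 := hint; rw [hb0, zero_mul, sub_zero] at h1; exact h1
    have huf : IsUnit f := isUnit_of_dvd_unit hfa hua
    have hdf : f.degree = 0 := degree_eq_zero_of_isUnit huf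
    rw [hdf] at hgdeg
    exact hg0 (degree_eq_bot.mp (Nat.WithBot.lt_zero_iff.mp hgdeg))
  have hkN : k ≤ N := by
    by_contra h
    have ha0 : a = 0 := by
      rw [ha]; apply Finset.sum_eq_zero; intro i hi
      rcases Nat.lt_or_ge i (N + 1) with h1 | h1
      · rw [hk.2 i (by omega), zero_mul]
      · have hi2 : i = N + 1 := by simp only [Finset.mem_range] at hi; omega
        rw [hi2, hrN1, mul_zero]
    have hcop' := hcop
    rw [ha0] at hcop'
    have hub : IsUnit b := isCoprime_zero_left.mp hcop'
    have hfg : f ∣ b * g := by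
      have h1 := hint; rw [ha0, zero_sub, dvd_neg] at h1; exact h1
    obtain ⟨v, hv⟩ := hub.exists_left_inv
    have hfg2 : f ∣ g := by
      have h2 : f ∣ v * (b * g) := Dvd.dvd.mul_left hfg v
      rwa [← mul_assoc, hv, one_mul] at h2
    exact absurd hgdeg (not_lt.mpr (degree_le_of_dvd hfg2 hg0))
  -- degree of a
  have hrk : r k ≠ 0 := rne k hkN
  have hmk := hk.1
  have hbltA : (⊥ : WithBot ℕ) < (m k * r k).degree :=
    bot_lt_iff_ne_bot.mpr (fun hb1 => (mul_ne_zero hmk hrk) (degree_eq_bot.mp hb1))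
  have hdega : a.degree = (m k * r k).degree := by
    rw [ha]
    apply degree_sum_eq_of_lt' _ _ k (mem_range.mpr (by omega)) (mul_ne_zero hmk hrk)
    intro i hi hik
    by_cases hmi : m i = 0
    · rw [hmi, zero_mul, degree_zero]; exact hbltA
    have hik2 : k < i := by
      by_contra h'
      exact hmi (hk.2 i (by omega))
    by_cases hiN : i = N + 1
    · rw [hiN, hrN1, mul_zero, degree_zero]; exact hbltA
    have hiN' : i ≤ N := by simp only [Finset.mem_range] at hi; omega
    have hri : r i ≠ 0 := rne i hiN'
    obtain ⟨i', rfl⟩ : ∃ j, i = j + 1 := ⟨i - 1, by omega⟩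
    obtain ⟨hqi0, hqie⟩ := hq i' hiN'
    have hmq : (m (i' + 1)).natDegree < (q (i' + 1)).natDegree :=
      natDegree_lt_natDegree hmi (hmdeg (i' + 1) (by omega) hiN')
    have hd1 : (r i').natDegree ≤ (r k).natDegree := dmono k i' (by omega) (by omega)
    rw [← natDegree_lt_natDegree_iff (mul_ne_zero hmi hri),
      natDegree_mul hmi hri, natDegree_mul hmk hrk]
    omega
  have hda : a.natDegree = (m k).natDegree + (r k).natDegree := by
    rw [natDegree_eq_of_degree_eq hdega, natDegree_mul hmk hrk]
  -- degree of b
  obtain ⟨k'', rfl⟩ : ∃ j, k' = j + 1 := ⟨k' - 1, by omega⟩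
  obtain ⟨hsk0, hske⟩ := hs k'' (by omega)
  have hmk' := hk'.1
  have hbltB : (⊥ : WithBot ℕ) < (m (k'' + 1) * s (k'' + 1)).degree :=
    bot_lt_iff_ne_bot.mpr (fun hb1 => (mul_ne_zero hmk' hsk0) (degree_eq_bot.mp hb1))
  have hdegb : b.degree = (m (k'' + 1) * s (k'' + 1)).degree := by
    rw [hb]
    apply degree_sum_eq_of_lt' _ _ (k'' + 1) (mem_range.mpr (by omega))
      (mul_ne_zero hmk' hsk0)
    intro i hi hik
    by_cases hmi : m i = 0
    · rw [hmi, zero_mul, degree_zero]; exact hbltB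
    have hik2 : i < k'' + 1 := by
      by_contra h'
      exact hmi (hk'.2 i (by omega))
    rcases Nat.eq_zero_or_pos i with rfl | hi1
    · rw [hs0, mul_zero, degree_zero]; exact hbltB
    obtain ⟨i', rfl⟩ : ∃ j, i = j + 1 := ⟨i - 1, by omega⟩
    have hiN : i' + 1 ≤ N := by omega
    obtain ⟨hqi0, hqie⟩ := hq i' hiN
    obtain ⟨hsi0, hsie⟩ := hs i' (by omega)
    have hmq : (m (i' + 1)).natDegree < (q (i' + 1)).natDegree :=
      natDegree_lt_natDegree hmi (hmdeg _ (by omega) hiN)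
    have hdm : (r k'').natDegree ≤ (r (i' + 1)).natDegree :=
      dmono (i' + 1) k'' (by omega) (by omega)
    rw [← natDegree_lt_natDegree_iff (mul_ne_zero hmi hsi0),
      natDegree_mul hmi hsi0, natDegree_mul hmk' hsk0]
    omega
  have hdb : b.natDegree = (m (k'' + 1)).natDegree + (s (k'' + 1)).natDegree := by
    rw [natDegree_eq_of_degree_eq hdegb, natDegree_mul hmk' hsk0]
  refine ⟨by omega, ?_, ?_⟩
  · intro h
    subst h
    obtain ⟨hqk0, hqke⟩ := hq k'' (by omega)
    omega
  · intro hlt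
    have hdm2 : (r k'').natDegree ≤ (r k).natDegree := dmono k k'' (by omega) (by omega)
    omega
end
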